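/- (Pairing of products, permanent formula) Let S_1,...,S_n be primitive series and P_1,...,P_n proper polynomials in K⟨Y⟩. Then ⟨P_1 ⧢_φ ⋯ ⧢_φ P_n, S_1 S_2 ⋯ S_n⟩ = Σ_{σ ∈ 𝔖_n} Π_{i=1}^n ⟨P_i, S_{σ(i)}⟩. -/

import Mathlib

noncomputable section

open Finsupp

variable {K : Type*} [CommRing K] [Algebra ℚ K]
variable {Y : Type*} [DecidableEq Y]

/-- The word `w ∈ Y*` viewed as a basis element of `K⟨Y⟩`. -/
def word (w : List Y) : List Y →₀ K := Finsupp.single w 1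

/-- Left concatenation by a letter, as a linear endomorphism of `K⟨Y⟩`. -/
def consL (a : Y) : (List Y →₀ K) →ₗ[K] (List Y →₀ K) :=
  Finsupp.lmapDomain K K (List.cons a)

/-- `m` is the `φ`-deformed shuffle product: it satisfies the initialization
`1 ⧢ w = w ⧢ 1 = w` and the recursion
`(au) ⧢ (bv) = a (u ⧢ bv) + b (au ⧢ v) + φ(a,b)(u ⧢ v)`. -/
def IsPhiShuffle (φ : Y → Y → (Y →₀ K))
    (m : (List Y →₀ K) →ₗ[K] (List Y →₀ K) →ₗ[K] (List Y →₀ K)) : Prop :=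
  (∀ w : List Y, m (word []) (word w) = word w) ∧
  (∀ w : List Y, m (word w) (word []) = word w) ∧
  ∀ (a b : Y) (u v : List Y),
    m (word (a :: u)) (word (b :: v)) =
      consL a (m (word u) (word (b :: v))) + consL b (m (word (a :: u)) (word v)) +
      (φ a b).sum fun c k => k • consL c (m (word u) (word v))

/-- Bilinear extension of `φ` to `KY`. -/
def phiExt (φ : Y → Y → (Y →₀ K)) (p q : Y →₀ K) : Y →₀ K :=
  p.sum fun a ka => q.sum fun b kb => (ka * kb) • φ a b

/-- The extension of `φ` to `KY ⊗ KY → KY` is associative. -/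
def PhiAssoc (φ : Y → Y → (Y →₀ K)) : Prop :=
  ∀ a b c : Y, phiExt φ (φ a b) (Finsupp.single c 1) = phiExt φ (Finsupp.single a 1) (φ b c)

/-- The extension of `φ` is commutative. -/
def PhiComm (φ : Y → Y → (Y →₀ K)) : Prop := ∀ a b : Y, φ a b = φ b a

/-- `φ` is dualizable: for every letter `z` only finitely many pairs of letters
have `z` in the support of their `φ`-product. -/
def PhiDualizable (φ : Y → Y → (Y →₀ K)) : Prop :=
  ∀ z : Y, {p : Y × Y | φ p.1 p.2 z ≠ 0}.Finite

/-- Extension of an associative `φ` to nonempty words: `φ(xw) = φ(x, φ(w))`. -/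
def phiWord (φ : Y → Y → (Y →₀ K)) : List Y → (Y →₀ K)
  | [] => 0
  | [x] => Finsupp.single x 1
  | x :: y :: w => (phiWord φ (y :: w)).sum fun b k => k • φ x b

/-- `φ` is moderate: for every letter `y`, only finitely many nonempty words `w`
satisfy `⟨y, φ(w)⟩ ≠ 0`. -/
def PhiModerate (φ : Y → Y → (Y →₀ K)) : Prop :=
  ∀ y : Y, {w : List Y | w ≠ [] ∧ phiWord φ w y ≠ 0}.Finite

/-- Pairing of two polynomials (the words form an orthonormal basis). -/
def pairPP (p q : List Y →₀ K) : K := p.sum fun w a => a * q w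

/-- Pairing `⟨S, p⟩` of a series with a polynomial. -/
def pairPS (S : List Y → K) (p : List Y →₀ K) : K := p.sum fun w a => a * S w

/-- Concatenation product on `K⟨Y⟩`. -/
def concP (p q : List Y →₀ K) : List Y →₀ K :=
  p.sum fun u a => q.sum fun v b => Finsupp.single (u ++ v) (a * b)

/-- Concatenation powers. -/
def concPow (p : List Y →₀ K) : ℕ → (List Y →₀ K)
  | 0 => word []
  | n + 1 => concP p (concPow p n)

/-- Powers with respect to a bilinear product `m`. -/
def mpow (m : (List Y →₀ K) →ₗ[K] (List Y →₀ K) →ₗ[K] (List Y →₀ K))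
    (p : List Y →₀ K) : ℕ → (List Y →₀ K)
  | 0 => word []
  | n + 1 => m p (mpow m p n)

/-- `m`-product of a list of polynomials. -/
def prodM (m : (List Y →₀ K) →ₗ[K] (List Y →₀ K) →ₗ[K] (List Y →₀ K))
    (L : List (List Y →₀ K)) : List Y →₀ K :=
  L.foldr (fun p acc => m p acc) (word [])

/-- The unit series. -/
def oneS : List Y → K := fun w => if w = [] then 1 else 0

/-- Concatenation (Cauchy) product of series. -/
def mulS (S T : List Y → K) : List Y → K := fun w =>
  ∑ i ∈ Finset.range (w.length + 1), S (w.take i) * T (w.drop i)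

/-- Concatenation powers of a series. -/
def powS (S : List Y → K) : ℕ → (List Y → K)
  | 0 => oneS
  | n + 1 => mulS S (powS S n)

/-- Concatenation product of a list of series. -/
def prodS (L : List (List Y → K)) : List Y → K := L.foldr (fun S acc => mulS S acc) oneS

/-- The coproduct `Δ_{⧢_φ}` dual to `m`, on series: `Δ(S)(u,v) = ⟨S, u ⧢_φ v⟩`. -/
def DeltaS (m : (List Y →₀ K) →ₗ[K] (List Y →₀ K) →ₗ[K] (List Y →₀ K))
    (S : List Y → K) : List Y × List Y → K :=
  fun p => pairPS S (m (word p.1) (word p.2))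

/-- `S` is primitive: `Δ_{⧢_φ}(S) = S ⊗ 1 + 1 ⊗ S`. -/
def PrimS (m : (List Y →₀ K) →ₗ[K] (List Y →₀ K) →ₗ[K] (List Y →₀ K))
    (S : List Y → K) : Prop :=
  ∀ u v : List Y, DeltaS m S (u, v) =
    (if v = [] then S u else 0) + (if u = [] then S v else 0)

/-- `S` is group-like: `⟨S,1⟩ = 1` and `Δ_{⧢_φ}(S) = S ⊗ S`. -/
def GroupLikeS (m : (List Y →₀ K) →ₗ[K] (List Y →₀ K) →ₗ[K] (List Y →₀ K))
    (S : List Y → K) : Prop :=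
  S [] = 1 ∧ ∀ u v : List Y, DeltaS m S (u, v) = S u * S v

/-- `Δfn` is the (finitely supported) dual coproduct witnessing dualizability of `m`:
`⟨u ⧢_φ v, w⟩ = ⟨u ⊗ v, Δ(w)⟩`. -/
def IsDualWitness (m : (List Y →₀ K) →ₗ[K] (List Y →₀ K) →ₗ[K] (List Y →₀ K))
    (Δfn : List Y → (List Y × List Y →₀ K)) : Prop :=
  ∀ u v w : List Y, (m (word u) (word v)) w = Δfn w (u, v)

/-- All factorizations of a word into nonempty blocks. -/
def cuts : List Y → List (List (List Y))
  | [] => [[]]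
  | a :: w =>
    (cuts w).flatMap fun parts =>
      match parts with
      | [] => [[[a]]]
      | p :: ps => [[a] :: p :: ps, (a :: p) :: ps]

/-- The extended Eulerian projector `π₁` on series:
`π₁(S) = Σ_{k≥1} ((-1)^{k-1}/k) Σ_{u_1⋯u_k = w, u_i ∈ Y⁺} ⟨S, u_1 ⧢_φ ⋯ ⧢_φ u_k⟩ w`. -/
def piOneS (m : (List Y →₀ K) →ₗ[K] (List Y →₀ K) →ₗ[K] (List Y →₀ K))
    (S : List Y → K) : List Y → K := fun w =>
  ((cuts w).map fun parts =>
    algebraMap ℚ K ((-1) ^ (parts.length - 1) / (parts.length : ℚ)) *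
      pairPS S (prodM m (parts.map word))).sum

/-- Logarithm of a series `S` with `⟨S,1⟩ = 1`. -/
def logS (S : List Y → K) : List Y → K := fun w =>
  ∑ n ∈ Finset.Icc 1 w.length,
    algebraMap ℚ K ((-1) ^ (n - 1) / (n : ℚ)) * powS (fun t => S t - oneS t) n w

/-- Convolution of endomorphisms (valued in series), using a dual coproduct witness. -/
def convT (Δfn : List Y → (List Y × List Y →₀ K))
    (f g : (List Y →₀ K) → (List Y → K)) : (List Y →₀ K) → (List Y → K) :=
  fun P w => P.sum fun t a =>
    a * (Δfn t).sum fun p c => c * mulS (f (word p.1)) (g (word p.2)) w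

/-- The convolution unit `e = 1 ∘ ε`. -/
def eT : (List Y →₀ K) → (List Y → K) := fun P w => if w = [] then P [] else 0

/-- Convolution powers `π₁^{⋆ n}` of the Eulerian projector. -/
def convPowPi (m : (List Y →₀ K) →ₗ[K] (List Y →₀ K) →ₗ[K] (List Y →₀ K))
    (Δfn : List Y → (List Y × List Y →₀ K)) : ℕ → ((List Y →₀ K) → (List Y → K))
  | 0 => eT
  | n + 1 => convT Δfn (fun P => piOneS m fun t => P t) (convPowPi m Δfn n)

/-- Lyndon words: nonempty and lexicographically smaller than each proper suffix. -/
def IsLyndon [LinearOrder Y] (w : List Y) : Prop :=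
  w ≠ [] ∧ ∀ u v : List Y, u ≠ [] → v ≠ [] → w = u ++ v → List.Lex (· < ·) w v

/-- Strictly decreasing lists of Lyndon words with positive exponents,
indexing monomials in Lyndon words. -/
abbrev DecLyn (Y : Type*) [LinearOrder Y] :=
  {s : List (List Y × ℕ) // (∀ p ∈ s, IsLyndon p.1 ∧ 0 < p.2) ∧
    s.Chain' fun a b => List.Lex (· < ·) b.1 a.1}

/-- `⧢_φ`-monomial `l₁^{⧢ i₁} ⧢ ⋯ ⧢ l_k^{⧢ i_k}`. -/
def shMonomial (m : (List Y →₀ K) →ₗ[K] (List Y →₀ K) →ₗ[K] (List Y →₀ K))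
    (s : List (List Y × ℕ)) : List Y →₀ K :=
  s.foldr (fun p acc => m (mpow m (word p.1) p.2) acc) (word [])

/-- Concatenation monomial `Π_{l₁}^{i₁} ⋯ Π_{l_k}^{i_k}` in a family `Pi`. -/
def concMonomial (Pi : List Y → (List Y →₀ K)) (s : List (List Y × ℕ)) : List Y →₀ K :=
  s.foldr (fun p acc => concP (concPow (Pi p.1) p.2) acc) (word [])

/-- The singleton index `l¹ ∈ DecLyn Y` attached to a Lyndon word. -/
def singleIdx [LinearOrder Y] (l : List Y) (hl : IsLyndon l) : DecLyn Y :=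
  ⟨[(l, 1)], ⟨fun p hp => by
      rw [List.mem_singleton] at hp; subst hp; exact ⟨hl, Nat.one_pos⟩,
    List.isChain_singleton _⟩⟩

/-- `(s, r)` is the standard factorization of the Lyndon word `l`:
`l = sr` with `s, r` nonempty and `r` the lexicographically least proper suffix. -/
def StdFact [LinearOrder Y] (l s r : List Y) : Prop :=
  l = s ++ r ∧ s ≠ [] ∧ r ≠ [] ∧
  ∀ s' r' : List Y, l = s' ++ r' → s' ≠ [] → r' ≠ [] → r = r' ∨ List.Lex (· < ·) r r'

/-- `Pi` is the family defined by `Π_y = π₁(y)` on letters and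
`Π_l = [Π_s, Π_r]` for the standard factorization `(s,r)` of a Lyndon word `l`. -/
def IsPiFamily [LinearOrder Y]
    (m : (List Y →₀ K) →ₗ[K] (List Y →₀ K) →ₗ[K] (List Y →₀ K))
    (Pi : List Y → (List Y →₀ K)) : Prop :=
  (∀ y : Y, ∀ w : List Y, Pi [y] w = piOneS m (fun t => (word [y] : List Y →₀ K) t) w) ∧
  ∀ l s r : List Y, IsLyndon l → StdFact l s r →
    Pi l = concP (Pi s) (Pi r) - concP (Pi r) (Pi s)

/-!
Primitivity of `S` makes the adjoint `S ⊳ ·` (`mulSAdjoint S`) of left multiplication by `S`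
a derivation of `⧢_φ`: the coproduct `Δ_{⧢_φ}` is a concatenation morphism, and
`Δ(S) = S ⊗ 1 + 1 ⊗ S` leaves only the terms where `S` is read entirely on one side, so
`⟨S T, P ⧢ Q⟩ = ⟨T, (S ⊳ P) ⧢ Q⟩ + ⟨T, P ⧢ (S ⊳ Q)⟩`.
Iterating, `⟨S_1 ⋯ S_k, P ⧢ Q⟩` is a sum over the splittings of `S_1, …, S_k` into two
complementary subsequences. For proper `P_1` a splitting contributes only if exactly one series
is paired with `P_1`; otherwise either `⟨1, P_1⟩ = 0` or too few series are left for the other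
proper polynomials. Expanding along `P_1` is thus the expansion of the permanent along a column.
-/

open Finset

section Pairing

variable {R : Type*} [CommRing R] {α : Type*}

theorem pairPS_eq_linearCombination (S : List α → R) (p : List α →₀ R) :
    pairPS S p = Finsupp.linearCombination R S p := rfl

@[simp] theorem pairPS_word (S : List α → R) (w : List α) : pairPS S (word w) = S w := by
  simp [pairPS_eq_linearCombination, word]

@[simp] theorem pairPS_add (S : List α → R) (p q : List α →₀ R) :
    pairPS S (p + q) = pairPS S p + pairPS S q := by
  simp only [pairPS_eq_linearCombination, map_add]

@[simp] theorem pairPS_smul (S : List α → R) (c : R) (p : List α →₀ R) :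
    pairPS S (c • p) = c * pairPS S p := by
  simp only [pairPS_eq_linearCombination, map_smul, smul_eq_mul]

theorem pairPS_sum {ι : Type*} (S : List α → R) (s : Finset ι) (p : ι → List α →₀ R) :
    pairPS S (∑ i ∈ s, p i) = ∑ i ∈ s, pairPS S (p i) := by
  simp only [pairPS_eq_linearCombination, map_sum]

@[simp] theorem pairPS_add_left (S T : List α → R) (p : List α →₀ R) :
    pairPS (S + T) p = pairPS S p + pairPS T p := by
  simp only [pairPS, Pi.add_apply, mul_add, Finsupp.sum_add]

@[simp] theorem pairPS_smul_left (c : R) (S : List α → R) (p : List α →₀ R) :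
    pairPS (c • S) p = c * pairPS S p := by
  simp only [pairPS, Pi.smul_apply, smul_eq_mul, Finsupp.mul_sum, mul_left_comm]

theorem pairPS_oneS (p : List α →₀ R) : pairPS oneS p = p [] := by
  classical
  simp only [pairPS, oneS, mul_ite, mul_one, mul_zero]
  rw [Finsupp.sum_ite_eq']
  split_ifs with h
  · rfl
  · exact (Finsupp.notMem_support_iff.mp h).symm

def leftQuot (a : α) (S : List α → R) : List α → R := fun w => S (a :: w)

theorem pairPS_consL (a : α) (S : List α → R) (p : List α →₀ R) :
    pairPS S (consL a p) = pairPS (leftQuot a S) p :=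
  Finsupp.sum_mapDomain_index (by simp) (by intros; ring)

theorem leftQuot_mulS (a : α) (S T : List α → R) :
    leftQuot a (mulS S T) = S [] • leftQuot a T + mulS (leftQuot a S) T := by
  funext w
  simp only [leftQuot, mulS, List.length_cons, Pi.add_apply, Pi.smul_apply, smul_eq_mul]
  rw [sum_range_succ', add_comm]
  simp

theorem mulS_oneS (S : List α → R) : mulS S oneS = S := by
  funext w
  rw [mulS, sum_range_succ, sum_eq_zero fun i hi => ?_]
  · simp [oneS]
  · have : w.drop i ≠ [] := by simpa using mem_range.mp hi
    simp [oneS, this]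

end Pairing

section TwoVariableSeries

variable {R : Type*} [CommRing R] {α : Type*}

/-- Concatenation product of series on pairs of words, i.e. on `K⟨⟨Y⟩⟩ ⊗̂ K⟨⟨Y⟩⟩`. -/
def mulS₂ (F G : List α × List α → R) : List α × List α → R := fun p =>
  ∑ j ∈ range (p.1.length + 1), ∑ k ∈ range (p.2.length + 1),
    F (p.1.take j, p.2.take k) * G (p.1.drop j, p.2.drop k)

theorem mulS₂_nil_left (F G : List α × List α → R) (v : List α) :
    mulS₂ F G ([], v) = ∑ k ∈ range (v.length + 1), F ([], v.take k) * G ([], v.drop k) := by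
  simp [mulS₂]

theorem mulS₂_nil_right (F G : List α × List α → R) (u : List α) :
    mulS₂ F G (u, []) = ∑ j ∈ range (u.length + 1), F (u.take j, []) * G (u.drop j, []) := by
  simp [mulS₂]

theorem mulS₂_cons_left (F G : List α × List α → R) (a : α) (u v : List α) :
    mulS₂ F G (a :: u, v) =
      ∑ k ∈ range (v.length + 1), F ([], v.take k) * G (a :: u, v.drop k) +
        mulS₂ (fun p => F (a :: p.1, p.2)) G (u, v) := by
  simp only [mulS₂, List.length_cons]
  rw [sum_range_succ', add_comm]
  simp

theorem mulS₂_cons_right (F G : List α × List α → R) (b : α) (u v : List α) :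
    mulS₂ F G (u, b :: v) =
      ∑ j ∈ range (u.length + 1), F (u.take j, []) * G (u.drop j, b :: v) +
        mulS₂ (fun p => F (p.1, b :: p.2)) G (u, v) := by
  simp only [mulS₂, List.length_cons]
  simp_rw [sum_range_succ' _ (v.length + 1)]
  rw [sum_add_distrib, add_comm]
  simp

theorem mulS₂_add_left (F F' G : List α × List α → R) :
    mulS₂ (F + F') G = mulS₂ F G + mulS₂ F' G := by
  funext p
  simp only [mulS₂, Pi.add_apply, add_mul, sum_add_distrib]

theorem mulS₂_finsuppSum_left {β : Type*} (f : β →₀ R) (F : β → List α × List α → R)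
    (G : List α × List α → R) (p : List α × List α) :
    mulS₂ (fun q => f.sum fun c k => k * F c q) G p = f.sum fun c k => k * mulS₂ (F c) G p := by
  simp only [mulS₂, Finsupp.sum, Finset.sum_mul, Finset.mul_sum, mul_assoc]
  symm
  rw [Finset.sum_comm]
  exact sum_congr rfl fun _ _ => Finset.sum_comm

end TwoVariableSeries

section Coproduct

variable {R : Type*} [CommRing R] {α : Type*} {φ : α → α → (α →₀ R)}
  {m : (List α →₀ R) →ₗ[R] (List α →₀ R) →ₗ[R] (List α →₀ R)}

theorem DeltaS_nil_left (hm : IsPhiShuffle φ m) (S : List α → R) (v : List α) :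
    DeltaS m S ([], v) = S v := by
  simp [DeltaS, hm.1]

theorem DeltaS_nil_right (hm : IsPhiShuffle φ m) (S : List α → R) (u : List α) :
    DeltaS m S (u, []) = S u := by
  simp [DeltaS, hm.2.1]

theorem DeltaS_cons_cons (hm : IsPhiShuffle φ m) (S : List α → R) (a b : α) (u v : List α) :
    DeltaS m S (a :: u, b :: v) =
      DeltaS m (leftQuot a S) (u, b :: v) + DeltaS m (leftQuot b S) (a :: u, v) +
        (φ a b).sum fun c k => k * DeltaS m (leftQuot c S) (u, v) := by
  simp only [DeltaS, hm.2.2, pairPS_add, pairPS_consL, Finsupp.sum, pairPS_sum, pairPS_smul]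

theorem DeltaS_add (S T : List α → R) : DeltaS m (S + T) = DeltaS m S + DeltaS m T := by
  funext p
  simp [DeltaS]

theorem DeltaS_smul (c : R) (S : List α → R) : DeltaS m (c • S) = c • DeltaS m S := by
  funext p
  simp [DeltaS]

theorem DeltaS_mulS (hm : IsPhiShuffle φ m) (S T : List α → R) :
    DeltaS m (mulS S T) = mulS₂ (DeltaS m S) (DeltaS m T) := by
  funext ⟨u, v⟩
  induction u generalizing S T v with
  | nil => simp [DeltaS_nil_left hm, mulS₂_nil_left, mulS]
  | cons a u ihu =>
    induction v generalizing S T with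
    | nil => simp [DeltaS_nil_right hm, mulS₂_nil_right, mulS]
    | cons b v ihv =>
      have hshift : (fun p : List α × List α => DeltaS m S (a :: p.1, b :: p.2)) =
          (fun p => DeltaS m (leftQuot a S) (p.1, b :: p.2)) +
            (fun p => DeltaS m (leftQuot b S) (a :: p.1, p.2)) +
            fun p => (φ a b).sum fun c k => k * DeltaS m (leftQuot c S) p :=
        funext fun p => DeltaS_cons_cons hm S a b p.1 p.2
      have hlhs : DeltaS m (mulS S T) (a :: u, b :: v) =
          S [] * DeltaS m T (a :: u, b :: v) + DeltaS m (mulS (leftQuot a S) T) (u, b :: v) +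
            DeltaS m (mulS (leftQuot b S) T) (a :: u, v) +
            (φ a b).sum fun c k => k * DeltaS m (mulS (leftQuot c S) T) (u, v) := by
        simp only [DeltaS_cons_cons hm _ a b, leftQuot_mulS, DeltaS_add, DeltaS_smul,
          Pi.add_apply, Pi.smul_apply, smul_eq_mul, mul_add, Finsupp.sum_add, Finsupp.mul_sum,
          mul_left_comm]
        ring
      -- peeling `a` and `b` off the right side leaves boundary sums, and `mulS₂` of the
      -- doubly shifted `ΔS`, which `hshift` splits as the left side was split
      rw [hlhs, ihu, ihv, mulS₂_cons_right _ _ b u v, mulS₂_cons_left _ _ a u v,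
        mulS₂_cons_left _ _ a u, mulS₂_cons_right _ _ b u v, hshift, mulS₂_add_left,
        mulS₂_add_left, Pi.add_apply, Pi.add_apply, mulS₂_finsuppSum_left]
      simp only [ihu, List.length_cons, sum_range_succ' _ (v.length + 1), List.take_succ_cons,
        List.drop_succ_cons, List.take_zero, List.drop_zero, DeltaS_nil_left hm,
        DeltaS_nil_right hm, leftQuot]
      ring

end Coproduct

section Primitive

variable {R : Type*} [CommRing R] {α : Type*} {φ : α → α → (α →₀ R)}
  {m : (List α →₀ R) →ₗ[R] (List α →₀ R) →ₗ[R] (List α →₀ R)}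

theorem sum_range_ite_take_eq_nil (v : List α) (g : ℕ → R) :
    ∑ k ∈ range (v.length + 1), (if v.take k = [] then g k else 0) = g 0 := by
  rw [sum_eq_single 0 (fun k hk hk0 => if_neg ?_) (by simp), List.take_zero, if_pos rfl]
  rw [List.take_eq_nil_iff, not_or, ← List.length_eq_zero_iff]
  have := mem_range.mp hk
  omega

theorem mulS₂_DeltaS_of_primS {S : List α → R} (hS : PrimS m S) (G : List α × List α → R)
    (u v : List α) :
    mulS₂ (DeltaS m S) G (u, v) =
      ∑ j ∈ range (u.length + 1), S (u.take j) * G (u.drop j, v) +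
        ∑ k ∈ range (v.length + 1), S (v.take k) * G (u, v.drop k) := by
  unfold PrimS at hS
  simp only [mulS₂, hS, add_mul, ite_mul, zero_mul, sum_add_distrib]
  congr 1
  · simp only [sum_range_ite_take_eq_nil, List.drop_zero]
  · rw [Finset.sum_comm]
    simp only [sum_range_ite_take_eq_nil, List.drop_zero]

def mulSAdjoint (S : List α → R) : (List α →₀ R) →ₗ[R] (List α →₀ R) :=
  Finsupp.linearCombination R fun w => ∑ j ∈ range (w.length + 1), S (w.take j) • word (w.drop j)

theorem mulSAdjoint_word (S : List α → R) (w : List α) :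
    mulSAdjoint S (word w) = ∑ j ∈ range (w.length + 1), S (w.take j) • word (w.drop j) := by
  simp [mulSAdjoint, word]

theorem pairPS_mulSAdjoint (S T : List α → R) (p : List α →₀ R) :
    pairPS T (mulSAdjoint S p) = pairPS (mulS S T) p := by
  have h : (Finsupp.linearCombination R T).comp (mulSAdjoint S) =
      Finsupp.linearCombination R (mulS S T) := by
    ext w
    change pairPS T (mulSAdjoint S (word w)) = pairPS (mulS S T) (word w)
    simp [mulSAdjoint_word, pairPS_sum, mulS]
  exact LinearMap.congr_fun h p

theorem pairPS_mulS_m_of_primS (hm : IsPhiShuffle φ m) {S : List α → R} (hS : PrimS m S)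
    (T : List α → R) (p q : List α →₀ R) :
    pairPS (mulS S T) (m p q) =
      pairPS T (m (mulSAdjoint S p) q) + pairPS T (m p (mulSAdjoint S q)) := by
  have h : m.compr₂ (Finsupp.linearCombination R (mulS S T)) =
      (m.compl₁₂ (mulSAdjoint S) LinearMap.id + m.compl₂ (mulSAdjoint S)).compr₂
        (Finsupp.linearCombination R T) := by
    ext u v
    simp only [LinearMap.comp_apply, LinearMap.compr₂_apply, lsingle_apply, LinearMap.add_apply,
      LinearMap.compl₁₂_apply, LinearMap.compl₂_apply, LinearMap.id_apply, map_add]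
    change DeltaS m (mulS S T) (u, v) =
      pairPS T (m (mulSAdjoint S (word u)) (word v)) +
        pairPS T (m (word u) (mulSAdjoint S (word v)))
    rw [DeltaS_mulS hm, mulS₂_DeltaS_of_primS hS, mulSAdjoint_word, mulSAdjoint_word]
    simp [pairPS_sum, DeltaS]
  simpa [pairPS_eq_linearCombination] using LinearMap.congr_fun₂ h p q

end Primitive

section Unshuffles

def unshuffles {β : Type*} : List β → List (List β × List β)
  | [] => [([], [])]
  | a :: l => (unshuffles l).flatMap fun p => [(a :: p.1, p.2), (p.1, a :: p.2)]

variable {β M : Type*} [AddCommMonoid M]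

theorem mem_unshuffles_cons {a : β} {l : List β} {p : List β × List β} :
    p ∈ unshuffles (a :: l) ↔
      ∃ q ∈ unshuffles l, p = (a :: q.1, q.2) ∨ p = (q.1, a :: q.2) := by
  simp [unshuffles]

theorem sum_map_unshuffles_cons (a : β) (l : List β) (f : List β × List β → M) :
    ((unshuffles (a :: l)).map f).sum =
      ((unshuffles l).map fun p => f (a :: p.1, p.2) + f (p.1, a :: p.2)).sum := by
  simp [unshuffles, List.flatMap, List.map_flatten, List.sum_flatten, Function.comp_def]

theorem length_add_length_of_mem_unshuffles {l : List β} {p : List β × List β}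
    (hp : p ∈ unshuffles l) : p.1.length + p.2.length = l.length := by
  induction l generalizing p with
  | nil => simp_all [unshuffles]
  | cons a l ih =>
    obtain ⟨q, hq, rfl | rfl⟩ := mem_unshuffles_cons.mp hp <;> simp [← ih hq] <;> omega

theorem snd_subset_of_mem_unshuffles {l : List β} {p : List β × List β}
    (hp : p ∈ unshuffles l) : p.2 ⊆ l := by
  induction l generalizing p with
  | nil => simp_all [unshuffles]
  | cons a l ih =>
    obtain ⟨q, hq, rfl | rfl⟩ := mem_unshuffles_cons.mp hp
    · exact fun x hx => List.mem_cons_of_mem a (ih hq hx)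
    · exact List.cons_subset_cons a (ih hq)

theorem sum_map_unshuffles_of_fst_ne_nil (l : List β) (f : List β × List β → M)
    (hf : ∀ p ∈ unshuffles l, p.1 ≠ [] → f p = 0) :
    ((unshuffles l).map f).sum = f ([], l) := by
  induction l generalizing f with
  | nil => simp [unshuffles]
  | cons a l ih =>
    rw [sum_map_unshuffles_cons, List.sum_map_add, List.sum_eq_zero, zero_add,
      ih (fun p => f (p.1, a :: p.2))]
    · exact fun p hp hne => hf _ (mem_unshuffles_cons.mpr ⟨p, hp, .inr rfl⟩) hne
    · simp only [List.mem_map]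
      rintro _ ⟨p, hp, rfl⟩
      exact hf _ (mem_unshuffles_cons.mpr ⟨p, hp, .inl rfl⟩) (List.cons_ne_nil _ _)

theorem sum_map_unshuffles_of_length_fst_ne_one (l : List β) (f : List β × List β → M)
    (hf : ∀ p ∈ unshuffles l, p.1.length ≠ 1 → f p = 0) :
    ((unshuffles l).map f).sum = ∑ j ∈ range l.length, f ((l.drop j).take 1, l.eraseIdx j) := by
  induction l generalizing f with
  | nil => simpa [unshuffles] using hf ([], []) (by simp [unshuffles])
  | cons a l ih =>
    rw [sum_map_unshuffles_cons, List.sum_map_add, sum_map_unshuffles_of_fst_ne_nil l,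
      ih (fun p => f (p.1, a :: p.2)), List.length_cons, sum_range_succ', add_comm]
    · simp
    · exact fun p hp hne => hf _ (mem_unshuffles_cons.mpr ⟨p, hp, .inr rfl⟩) hne
    · intro p hp hne
      refine hf _ (mem_unshuffles_cons.mpr ⟨p, hp, .inl rfl⟩) ?_
      simpa [List.length_eq_zero_iff] using hne

end Unshuffles

theorem List.eraseIdx_ofFn {β : Type*} {n : ℕ} (f : Fin (n + 1) → β) (i : Fin (n + 1)) :
    (List.ofFn f).eraseIdx i = List.ofFn fun j => f (i.succAbove j) := by
  induction n with
  | zero => rw [Fin.fin_one_eq_zero i]; simp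
  | succ n ih =>
    cases i using Fin.cases with
    | zero => simp [List.ofFn_succ]
    | succ i =>
      rw [List.ofFn_succ (f := f), Fin.val_succ, List.eraseIdx_cons_succ, ih, List.ofFn_succ]
      simp [Fin.succ_succAbove_succ]

theorem List.take_one_drop_ofFn {β : Type*} {n : ℕ} (f : Fin n → β) (i : Fin n) :
    ((List.ofFn f).drop i).take 1 = [f i] := by
  rw [List.drop_eq_getElem_cons (by simp)]
  simp

theorem Matrix.permanent_succ_column_zero {R : Type*} [CommSemiring R] {n : ℕ}
    (M : Matrix (Fin (n + 1)) (Fin (n + 1)) R) :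
    M.permanent = ∑ i, M i 0 * (M.submatrix i.succAbove Fin.succ).permanent := by
  rw [Matrix.permanent, Finset.univ_perm_fin_succ, ← Finset.univ_product_univ, Finset.sum_map,
    Finset.sum_product]
  refine sum_congr rfl fun i _ => ?_
  simp only [Equiv.toEmbedding_apply, Fin.prod_univ_succ, Equiv.Perm.decomposeFin_symm_apply_zero,
    Equiv.Perm.decomposeFin_symm_apply_succ, ← Finset.mul_sum]
  congr 1
  cases i using Fin.cases with
  | zero => simp [Matrix.permanent]
  | succ i =>
    rw [← Matrix.permanent_permute_cols (Fin.cycleRange i)]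
    simp [Matrix.permanent, Fin.succAbove_cycleRange]

section Products

variable {R : Type*} [CommRing R] {α : Type*} {φ : α → α → (α →₀ R)}
  {m : (List α →₀ R) →ₗ[R] (List α →₀ R) →ₗ[R] (List α →₀ R)}

@[simp] theorem prodS_nil : prodS ([] : List (List α → R)) = oneS := rfl

@[simp] theorem prodS_cons (S : List α → R) (L : List (List α → R)) :
    prodS (S :: L) = mulS S (prodS L) := rfl

@[simp] theorem prodM_nil : prodM m [] = word [] := rfl

@[simp] theorem prodM_cons (p : List α →₀ R) (L : List (List α →₀ R)) :
    prodM m (p :: L) = m p (prodM m L) := rfl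

theorem consL_apply_nil (a : α) (p : List α →₀ R) : consL a p [] = 0 :=
  Finsupp.mapDomain_of_notMem_range p [] (by simp)

theorem IsPhiShuffle.apply_nil (hm : IsPhiShuffle φ m) (p q : List α →₀ R) :
    m p q [] = p [] * q [] := by
  have h : m.compr₂ (Finsupp.lapply []) =
      (LinearMap.mul R R).compl₁₂ (Finsupp.lapply []) (Finsupp.lapply []) := by
    ext u v
    change m (word u) (word v) [] = word u [] * word v []
    cases u <;> cases v <;> simp only [hm.1, hm.2.1, hm.2.2] <;>
      simp [word, consL_apply_nil, Finsupp.sum]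
  simpa using LinearMap.congr_fun₂ h p q

theorem pairPS_prodS_m_eq_sum_unshuffles (hm : IsPhiShuffle φ m) {L : List (List α → R)}
    (hL : ∀ S ∈ L, PrimS m S) (p q : List α →₀ R) :
    pairPS (prodS L) (m p q) =
      ((unshuffles L).map fun A => pairPS (prodS A.1) p * pairPS (prodS A.2) q).sum := by
  induction L generalizing p q with
  | nil => simp [unshuffles, pairPS_oneS, hm.apply_nil]
  | cons S L ih =>
    have hL' := fun T hT => hL T (List.mem_cons_of_mem S hT)
    rw [prodS_cons, pairPS_mulS_m_of_primS hm (hL S List.mem_cons_self), ih hL', ih hL',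
      sum_map_unshuffles_cons, List.sum_map_add]
    simp [pairPS_mulSAdjoint]

theorem pairPS_prodS_prodM_eq_zero_of_length_lt (hm : IsPhiShuffle φ m)
    {L : List (List α → R)} (hL : ∀ S ∈ L, PrimS m S) {Ps : List (List α →₀ R)}
    (hPs : ∀ p ∈ Ps, p [] = 0) (hlt : L.length < Ps.length) :
    pairPS (prodS L) (prodM m Ps) = 0 := by
  induction Ps generalizing L with
  | nil => simp at hlt
  | cons p Ps ih =>
    rw [prodM_cons, pairPS_prodS_m_eq_sum_unshuffles hm hL]
    refine List.sum_eq_zero ?_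
    simp only [List.mem_map]
    rintro _ ⟨A, hA, rfl⟩
    by_cases hA₀ : A.1 = []
    · rw [hA₀, prodS_nil, pairPS_oneS, hPs p List.mem_cons_self, zero_mul]
    · have hlen := length_add_length_of_mem_unshuffles hA
      have hA₀' : A.1.length ≠ 0 := by simpa using hA₀
      rw [ih (fun S hS => hL S (snd_subset_of_mem_unshuffles hA hS))
        (fun q hq => hPs q (List.mem_cons_of_mem p hq)) (by simp at hlt; omega), mul_zero]

theorem pairPS_prodS_prodM_cons (hm : IsPhiShuffle φ m) {L : List (List α → R)}
    (hL : ∀ S ∈ L, PrimS m S) {p : List α →₀ R} {Ps : List (List α →₀ R)} (hp : p [] = 0)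
    (hPs : ∀ q ∈ Ps, q [] = 0) (hlen : L.length ≤ Ps.length + 1) :
    pairPS (prodS L) (prodM m (p :: Ps)) =
      ∑ j ∈ range L.length,
        pairPS (prodS ((L.drop j).take 1)) p * pairPS (prodS (L.eraseIdx j)) (prodM m Ps) := by
  rw [prodM_cons, pairPS_prodS_m_eq_sum_unshuffles hm hL, sum_map_unshuffles_of_length_fst_ne_one]
  intro A hA hA₁
  by_cases hA₀ : A.1 = []
  · rw [hA₀, prodS_nil, pairPS_oneS, hp, zero_mul]
  · have hA₀' : A.1.length ≠ 0 := by simpa using hA₀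
    have hA₂ := length_add_length_of_mem_unshuffles hA
    rw [pairPS_prodS_prodM_eq_zero_of_length_lt hm
      (fun S hS => hL S (snd_subset_of_mem_unshuffles hA hS)) hPs (by omega), mul_zero]

end Products

theorem pairing_products_permanent_general (φ : Y → Y → (Y →₀ K))
    (m : (List Y →₀ K) →ₗ[K] (List Y →₀ K) →ₗ[K] (List Y →₀ K))
    (hm : IsPhiShuffle φ m) (n : ℕ)
    (Ps : Fin n → (List Y →₀ K)) (Ss : Fin n → (List Y → K))
    (hP : ∀ i, Ps i ([] : List Y) = 0) (hS : ∀ i, PrimS m (Ss i)) :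
    pairPS (prodS (List.ofFn Ss)) (prodM m (List.ofFn Ps)) =
      ∑ σ : Equiv.Perm (Fin n), ∏ i, pairPS (Ss (σ i)) (Ps i) := by
  change _ = (Matrix.of fun i j => pairPS (Ss i) (Ps j)).permanent
  induction n with
  | zero => simp [pairPS_oneS, word, Matrix.permanent_isEmpty]
  | succ n ih =>
    rw [List.ofFn_succ (f := Ps), pairPS_prodS_prodM_cons hm (List.forall_mem_ofFn_iff.mpr hS)
      (hP 0) (List.forall_mem_ofFn_iff.mpr fun i => hP i.succ) (by simp), List.length_ofFn,
      ← Fin.sum_univ_eq_sum_range, Matrix.permanent_succ_column_zero]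
    refine sum_congr rfl fun i _ => ?_
    rw [List.take_one_drop_ofFn, List.eraseIdx_ofFn, prodS_cons, prodS_nil, mulS_oneS,
      ih _ _ (fun j => hP j.succ) (fun j => hS _)]
    rfl

/-- pairing of products, permanent formula: for primitive series
`S_1,…,S_n` and proper polynomials `P_1,…,P_n`,
`⟨P_1 ⧢_φ ⋯ ⧢_φ P_n, S_1 ⋯ S_n⟩ = Σ_{σ ∈ 𝔖_n} Π_i ⟨P_i, S_{σ(i)}⟩`. -/
theorem pairing_products_permanent (φ : Y → Y → (Y →₀ K))
    (m : (List Y →₀ K) →ₗ[K] (List Y →₀ K) →ₗ[K] (List Y →₀ K))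
    (hm : IsPhiShuffle φ m) (hassoc : PhiAssoc φ) (hcomm : PhiComm φ)
    (hdual : PhiDualizable φ) (n : ℕ)
    (Ps : Fin n → (List Y →₀ K)) (Ss : Fin n → (List Y → K))
    (hP : ∀ i, Ps i ([] : List Y) = 0) (hS : ∀ i, PrimS m (Ss i)) :
    pairPS (prodS (List.ofFn Ss)) (prodM m (List.ofFn Ps)) =
      ∑ σ : Equiv.Perm (Fin n), ∏ i, pairPS (Ss (σ i)) (Ps i) :=
  pairing_products_permanent_general φ m hm n Ps Ss hP hS

end
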